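/- arXiv:1712.02049 — 5 statements merged into one kernel-verified Lean document; each statement's English description precedes it below -/
import Mathlib

section
/- Let z ∈ ℂ with Im z > 0, let T > 0, and let h : [0,T) → ℂ be differentiable with h(0) = z, h(t) ≠ 0, h(t)² ≠ 4t, and h(t)·exp(2t/h(t)²) = z for all t ∈ [0,T). Define g(t) := h(t) + 4t/h(t). Then g(0) = z, and for all t ∈ [0,T): g′(t) = 2/h(t) and 2t·g′(t)² − g(t)·g′(t) + 2 = 0. -/
/-!
Differentiating `h · exp (2t / h²) = z` gives `h' (h² - 4t) = -2h`, so
`g' = (h' (h² - 4t) + 4h) / h² = 2 / h`; the quadratic relation for `g' = 2/h` and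
`g = h + 4t/h` is then an algebraic identity.
-/

open Complex

theorem HasDerivWithinAt.eq_zero_of_eqOn_const {𝕜 F : Type*} [NontriviallyNormedField 𝕜]
    [NormedAddCommGroup F] [NormedSpace 𝕜 F] {f : 𝕜 → F} {f' c : F} {s : Set 𝕜} {x : 𝕜}
    (hf : HasDerivWithinAt f f' s x) (hs : UniqueDiffWithinAt 𝕜 s x)
    (hc : ∀ y ∈ s, f y = c) (hx : x ∈ s) : f' = 0 :=
  hs.eq_deriv s hf ((hasDerivWithinAt_const x s c).congr_of_mem hc hx)

section LambertFlow

variable {h : ℝ → ℂ} {b : ℂ} {t : ℝ}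

theorem hasDerivAt_mul_cexp_two_mul_div_sq (hd : HasDerivAt h b t) (ha : h t ≠ 0) :
    HasDerivAt (fun s : ℝ => h s * exp (2 * (s : ℂ) / h s ^ 2))
      (exp (2 * (t : ℂ) / h t ^ 2) * (b * (h t ^ 2 - 4 * t) + 2 * h t) / h t ^ 2) t := by
  have hnum : HasDerivAt (fun s : ℝ => 2 * (s : ℂ)) 2 t := by
    simpa using ((hasDerivAt_id t).ofReal_comp).const_mul (2 : ℂ)
  have hsq : HasDerivAt (fun s : ℝ => h s ^ 2) (2 * h t * b) t := by
    simpa using hd.fun_pow 2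
  have hexponent : HasDerivAt (fun s : ℝ => 2 * (s : ℂ) / h s ^ 2)
      ((2 * h t ^ 2 - 2 * t * (2 * h t * b)) / (h t ^ 2) ^ 2) t :=
    hnum.div hsq (pow_ne_zero 2 ha)
  refine (hd.mul hexponent.cexp).congr_deriv ?_
  field_simp
  ring

theorem mul_sq_sub_four_mul_eq_of_mul_cexp_eqOn_const {s : Set ℝ} {z : ℂ}
    (hd : HasDerivAt h b t) (ha : h t ≠ 0) (hs : UniqueDiffWithinAt ℝ s t) (ht : t ∈ s)
    (hfe : ∀ u ∈ s, h u * exp (2 * (u : ℂ) / h u ^ 2) = z) :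
    b * (h t ^ 2 - 4 * t) = -2 * h t := by
  have hzero := (hasDerivAt_mul_cexp_two_mul_div_sq hd ha).hasDerivWithinAt.eq_zero_of_eqOn_const
    hs hfe ht
  rw [div_eq_zero_iff, mul_eq_zero] at hzero
  rcases hzero with (hexp | hrel) | hsq
  · exact absurd hexp (exp_ne_zero _)
  · linear_combination hrel
  · exact absurd hsq (pow_ne_zero 2 ha)

theorem hasDerivAt_add_four_mul_div (hd : HasDerivAt h b t) (ha : h t ≠ 0)
    (hrel : b * (h t ^ 2 - 4 * t) = -2 * h t) :
    HasDerivAt (fun s : ℝ => h s + 4 * (s : ℂ) / h s) (2 / h t) t := by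
  have hlin : HasDerivAt (fun s : ℝ => 4 * (s : ℂ)) 4 t := by
    simpa using ((hasDerivAt_id t).ofReal_comp).const_mul (4 : ℂ)
  have hquot : HasDerivAt (fun s : ℝ => 4 * (s : ℂ) / h s) ((4 * h t - 4 * t * b) / h t ^ 2) t :=
    hlin.div hd ha
  refine (hd.add hquot).congr_deriv ?_
  field_simp
  linear_combination hrel

end LambertFlow

theorem stmt_2_general (z : ℂ) (T : ℝ)
    (h h' : ℝ → ℂ) (h0 : h 0 = z)
    (hne : ∀ t ∈ Set.Ico (0:ℝ) T, h t ≠ 0)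
    (hfe : ∀ t ∈ Set.Ico (0:ℝ) T,
      h t * Complex.exp (2 * (t : ℂ) / (h t) ^ 2) = z)
    (hd : ∀ t ∈ Set.Ico (0:ℝ) T, HasDerivAt h (h' t) t) :
    (fun s : ℝ => h s + 4 * (s : ℂ) / h s) 0 = z ∧
    ∀ t ∈ Set.Ico (0:ℝ) T,
      HasDerivAt (fun s : ℝ => h s + 4 * (s : ℂ) / h s) (2 / h t) t ∧
      2 * (t : ℂ) * (2 / h t) ^ 2
        - (h t + 4 * (t : ℂ) / h t) * (2 / h t) + 2 = 0 := by
  refine ⟨by simp [h0], fun t ht => ⟨?_, ?_⟩⟩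
  · have hrel := mul_sq_sub_four_mul_eq_of_mul_cexp_eqOn_const (hd t ht) (hne t ht)
      (uniqueDiffOn_Ico 0 T t ht) ht hfe
    exact hasDerivAt_add_four_mul_div (hd t ht) (hne t ht) hrel
  · have ha := hne t ht
    field_simp
    ring

/-- Branch-free form of Proposition 3.1: if `h e^{2t/h²} = z` on `[0,T)` and
`g t = h t + 4t/h t`, then `g 0 = z`, `g' t = 2/h t` and
`2t g'² - g g' + 2 = 0`. -/
theorem stmt_2 (z : ℂ) (hz : 0 < z.im) (T : ℝ) (hT : 0 < T)
    (h h' : ℝ → ℂ) (h0 : h 0 = z)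
    (hne : ∀ t ∈ Set.Ico (0:ℝ) T, h t ≠ 0)
    (hne2 : ∀ t ∈ Set.Ico (0:ℝ) T, (h t) ^ 2 ≠ 4 * (t : ℂ))
    (hfe : ∀ t ∈ Set.Ico (0:ℝ) T,
      h t * Complex.exp (2 * (t : ℂ) / (h t) ^ 2) = z)
    (hd : ∀ t ∈ Set.Ico (0:ℝ) T, HasDerivAt h (h' t) t) :
    (fun s : ℝ => h s + 4 * (s : ℂ) / h s) 0 = z ∧
    ∀ t ∈ Set.Ico (0:ℝ) T,
      HasDerivAt (fun s : ℝ => h s + 4 * (s : ℂ) / h s) (2 / h t) t ∧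
      2 * (t : ℂ) * (2 / h t) ^ 2
        - (h t + 4 * (t : ℂ) / h t) * (2 / h t) + 2 = 0 :=
  stmt_2_general z T h h' h0 hne hfe hd
end

section
/- The set {2ir·exp(−iφ − e^{2iφ}/2) : φ ∈ [−π/2, π/2], r ∈ [0,1]} intersected with the real line ℝ equals the closed interval [−2√e, 2√e]. -/
/-!
The modulus of `2ir·exp(−iφ − e^{2iφ}/2)` is `2r·exp(−cos(2φ)/2) ≤ 2√e`, which bounds every real
point of the hull. Conversely, at `φ = π/2` the exponential factor equals `−i√e`, so the segment
`r ∈ [0, 1]` sweeps out `[0, 2√e]`; the reflection `φ ↦ −φ` acts as `z ↦ −z̄` and gives `[−2√e, 0]`.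
-/

open Complex ComplexConjugate Set

noncomputable def hullParam (φ r : ℝ) : ℂ :=
  2 * I * r * exp (-(I * φ) - exp (2 * I * φ) / 2)

lemma re_hull_exponent (φ : ℝ) :
    (-(I * φ) - exp (2 * I * φ) / 2).re = -Real.cos (2 * φ) / 2 := by
  simp [exp_re]
  ring

lemma norm_hullParam (φ : ℝ) {r : ℝ} (hr : 0 ≤ r) :
    ‖hullParam φ r‖ = 2 * r * Real.exp (-Real.cos (2 * φ) / 2) := by
  rw [hullParam, norm_mul, norm_exp, re_hull_exponent]
  simp [abs_of_nonneg hr]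

lemma norm_hullParam_le (φ : ℝ) {r : ℝ} (hr : r ∈ Icc (0 : ℝ) 1) :
    ‖hullParam φ r‖ ≤ 2 * √(Real.exp 1) := by
  rw [norm_hullParam φ hr.1, ← Real.exp_half]
  have hexp_le : Real.exp (-Real.cos (2 * φ) / 2) ≤ Real.exp (1 / 2) := by
    gcongr
    linarith [Real.neg_one_le_cos (2 * φ)]
  calc 2 * r * Real.exp (-Real.cos (2 * φ) / 2) ≤ 2 * 1 * Real.exp (1 / 2) := by
        gcongr; exact hr.2
    _ = _ := by ring

lemma hullParam_pi_div_two (r : ℝ) :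
    hullParam (Real.pi / 2) r = ((2 * √(Real.exp 1) * r : ℝ) : ℂ) := by
  have hexp : -(I * ↑(Real.pi / 2)) - exp (2 * I * ↑(Real.pi / 2)) / 2
      = ((1 / 2 : ℝ) : ℂ) + -Real.pi / 2 * I := by
    rw [show 2 * I * ↑(Real.pi / 2) = Real.pi * I by push_cast; ring, exp_pi_mul_I]
    push_cast; ring
  rw [hullParam, hexp, exp_add, exp_neg_pi_div_two_mul_I, ← ofReal_exp, Real.exp_half]
  push_cast
  linear_combination -(2 * √(Real.exp 1) * r : ℂ) * I_sq

lemma hullParam_neg (φ r : ℝ) : hullParam (-φ) r = -conj (hullParam φ r) := by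
  simp only [hullParam, map_neg, map_mul, map_sub, map_div₀, ← exp_conj, conj_I, conj_ofReal,
    map_ofNat, ofReal_neg]
  ring_nf

lemma exists_mem_Icc_eq_mul_or_eq_neg_mul {c x : ℝ} (hc : 0 < c) (hx : x ∈ Icc (-c) c) :
    ∃ r ∈ Icc (0 : ℝ) 1, x = c * r ∨ x = -(c * r) := by
  refine ⟨|x| / c, ⟨by positivity, div_le_one_of_le₀ (abs_le.2 hx) hc.le⟩, ?_⟩
  rw [mul_div_cancel₀ _ hc.ne']
  rcases le_total 0 x with h | h
  · exact .inl (abs_of_nonneg h).symm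
  · exact .inr (by rw [abs_of_nonpos h, neg_neg])

/-- The hull `𝒦 = {2ir exp(-iφ - e^{2iφ}/2)}` intersected with the real line
equals the interval `[-2√e, 2√e]`. -/
theorem stmt_9 :
    {z : ℂ | ∃ φ ∈ Set.Icc (-(Real.pi / 2)) (Real.pi / 2), ∃ r ∈ Set.Icc (0:ℝ) 1,
        z = 2 * Complex.I * (r : ℂ) *
          Complex.exp (-(Complex.I * (φ : ℂ))
            - Complex.exp (2 * Complex.I * (φ : ℂ)) / 2)}
      ∩ Set.range ((↑) : ℝ → ℂ)
    = ((↑) : ℝ → ℂ) ''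
        Set.Icc (-(2 * Real.sqrt (Real.exp 1))) (2 * Real.sqrt (Real.exp 1)) := by
  change {z | ∃ φ ∈ Icc _ _, ∃ r ∈ Icc (0 : ℝ) 1, z = hullParam φ r} ∩ _ = _
  have hπ : -(Real.pi / 2) ≤ Real.pi / 2 := by linarith [Real.pi_pos]
  ext z
  constructor
  · rintro ⟨⟨φ, -, r, hr, rfl⟩, x, hx⟩
    refine ⟨x, ?_, hx⟩
    rw [mem_Icc, ← abs_le, ← Real.norm_eq_abs, ← norm_real, hx]
    exact norm_hullParam_le φ hr
  · rintro ⟨x, hx, rfl⟩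
    refine ⟨?_, x, rfl⟩
    obtain ⟨r, hr, rfl | rfl⟩ := exists_mem_Icc_eq_mul_or_eq_neg_mul (by positivity) hx
    · exact ⟨Real.pi / 2, ⟨hπ, le_rfl⟩, r, hr, (hullParam_pi_div_two r).symm⟩
    · refine ⟨-(Real.pi / 2), ⟨le_rfl, hπ⟩, r, hr, ?_⟩
      rw [hullParam_neg, hullParam_pi_div_two, conj_ofReal, ofReal_neg]
end

section
/- Let a > 0, T > 0, and let h : [0,T) → ℂ be differentiable with h(t)² ≠ a² and (h(t)² − a²)² ≠ 4t(h(t)² + a²) for all t ∈ [0,T). Then h satisfies h′(t) = −(2h(t)/(h(t)² − a²)) / (1 − 4t(h(t)² + a²)/(h(t)² − a²)²) for all t ∈ [0,T) if and only if the function t ↦ (h(t)² − a²)·exp(4t·h(t)²/(h(t)² − a²)²) is constant on [0,T). -/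
/-!
Along a differentiable `h`, the quantity `I(t) = (h² - a²) exp (4t h² / (h² - a²)²)` has
derivative `exp (…) · 2h · K · (h' - V)`, where `V = -(2h / (h² - a²)) / K` is the right-hand
side of the ODE and `K = 1 - 4t (h² + a²) / (h² - a²)²` does not vanish. Hence `I` is constant
on `[0, T)` iff at each time `h = 0` or `h' = V`. Since `V = c · h` with `c` continuous, at a
zero of `h` Grönwall's inequality makes `h` vanish on a right neighbourhood, so there
`h' = 0 = V` as well.
-/

open Set Complex

theorem Convex.forall_eq_iff_forall_hasDerivWithinAt_eq_zero {E : Type*}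
    [NormedAddCommGroup E] [NormedSpace ℝ E] {f f' : ℝ → E} {s : Set ℝ} (hs : Convex ℝ s)
    (hs' : UniqueDiffOn ℝ s) (hf : ∀ x ∈ s, HasDerivWithinAt f (f' x) s x) :
    (∀ x ∈ s, ∀ y ∈ s, f x = f y) ↔ ∀ x ∈ s, f' x = 0 := by
  constructor
  · intro hconst x hx
    have h0 : HasDerivWithinAt f 0 s x :=
      (hasDerivWithinAt_const x s (f x)).congr (fun y hy => hconst y hy x hx) rfl
    exact (hs' x hx).eq_deriv s (hf x hx) h0
  · intro hzero x hx y hy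
    have := hs.norm_image_sub_le_of_norm_hasDerivWithin_le hf
      (fun z hz => (norm_eq_zero.2 (hzero z hz)).le) hy hx
    simpa [sub_eq_zero] using this

/-- `f²` satisfies a genuine linear ODE `(f²)' = 2 g f²`, also at the zeros of `f`, so Grönwall
forces `f ≡ 0` to the right of a zero. -/
theorem eq_zero_of_eq_zero_or_hasDerivAt_eq_mul {𝕜 : Type*} [RCLike 𝕜] {f f' g : ℝ → 𝕜}
    {a b : ℝ} (hab : a < b) (hf : ∀ x ∈ Icc a b, HasDerivAt f (f' x) x)
    (hg : ContinuousOn g (Icc a b)) (hode : ∀ x ∈ Ico a b, f x = 0 ∨ f' x = g x * f x)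
    (ha : f a = 0) : f' a = 0 := by
  obtain ⟨M, hM⟩ := isCompact_Icc.exists_bound_of_continuousOn hg
  have hsq : ∀ x ∈ Ico a b, 2 * f x * f' x = 2 * g x * f x ^ 2 := by
    intro x hx
    rcases hode x hx with h0 | h1
    · simp [h0]
    · rw [h1]; ring
  have hzero : ∀ x ∈ Icc a b, f x ^ 2 = 0 := by
    refine eq_zero_of_abs_deriv_le_mul_abs_self_of_eq_zero_right (K := 2 * M)
      (f' := fun x => 2 * f x * f' x)
      (fun x hx => ((hf x hx).pow 2).continuousAt.continuousWithinAt)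
      (fun x hx => ?_) (by simp [ha]) (fun x hx => ?_)
    · exact ((hf x (Ico_subset_Icc_self hx)).fun_pow 2).hasDerivWithinAt.congr_deriv
        (by push_cast; ring)
    · rw [hsq x hx, norm_mul, norm_mul, RCLike.norm_two]
      gcongr
      exact hM x (Ico_subset_Icc_self hx)
  have hmem : a ∈ Icc a b := left_mem_Icc.2 hab.le
  have h0 : HasDerivWithinAt f 0 (Icc a b) a :=
    (hasDerivWithinAt_const a _ 0).congr (fun x hx => (pow_eq_zero_iff two_ne_zero).1 (hzero x hx))
      ha
  exact (uniqueDiffOn_Icc hab a hmem).eq_deriv _ (hf a hmem).hasDerivWithinAt h0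

noncomputable section TwoSource

variable (a t : ℝ) (z : ℂ)

def twoSourceFactor : ℂ :=
  1 - 4 * (t : ℂ) * (z ^ 2 + (a : ℂ) ^ 2) / (z ^ 2 - (a : ℂ) ^ 2) ^ 2

def twoSourceField : ℂ :=
  -(2 * z / (z ^ 2 - (a : ℂ) ^ 2)) / twoSourceFactor a t z

def twoSourceIntegral : ℂ :=
  (z ^ 2 - (a : ℂ) ^ 2) * exp (4 * (t : ℂ) * z ^ 2 / (z ^ 2 - (a : ℂ) ^ 2) ^ 2)

variable {a t z}

theorem twoSourceFactor_ne_zero (hz : z ^ 2 ≠ (a : ℂ) ^ 2)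
    (hz' : (z ^ 2 - (a : ℂ) ^ 2) ^ 2 ≠ 4 * (t : ℂ) * (z ^ 2 + (a : ℂ) ^ 2)) :
    twoSourceFactor a t z ≠ 0 := by
  rw [twoSourceFactor, sub_ne_zero, ne_comm, ne_eq,
    div_eq_one_iff_eq (pow_ne_zero 2 (sub_ne_zero.2 hz))]
  exact hz'.symm

theorem twoSourceField_eq_mul :
    twoSourceField a t z = -2 / ((z ^ 2 - (a : ℂ) ^ 2) * twoSourceFactor a t z) * z := by
  simp only [twoSourceField, div_eq_mul_inv, mul_inv]
  ring

theorem ContinuousAt.twoSourceField_coeff {h : ℝ → ℂ} (hh : ContinuousAt h t)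
    (hD : h t ^ 2 ≠ (a : ℂ) ^ 2) (hK : twoSourceFactor a t (h t) ≠ 0) :
    ContinuousAt (fun s => -2 / ((h s ^ 2 - (a : ℂ) ^ 2) * twoSourceFactor a s (h s))) t := by
  have hD0 := sub_ne_zero.2 hD
  unfold twoSourceFactor at hK ⊢
  fun_prop (disch := simp [hD0, hK])

theorem mul_twoSourceFactor_mul_sub_twoSourceField (hK : twoSourceFactor a t z ≠ 0) (w : ℂ) :
    2 * z * twoSourceFactor a t z * (w - twoSourceField a t z) =
      2 * z * w * twoSourceFactor a t z + 4 * z ^ 2 / (z ^ 2 - (a : ℂ) ^ 2) := by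
  rw [twoSourceField]
  field_simp
  ring

theorem hasDerivAt_twoSourceIntegral {h : ℝ → ℂ} {w : ℂ} (hD : h t ^ 2 ≠ (a : ℂ) ^ 2)
    (hK : twoSourceFactor a t (h t) ≠ 0) (hh : HasDerivAt h w t) :
    HasDerivAt (fun s => twoSourceIntegral a s (h s))
      (exp (4 * (t : ℂ) * h t ^ 2 / (h t ^ 2 - (a : ℂ) ^ 2) ^ 2) *
        (2 * h t * twoSourceFactor a t (h t) * (w - twoSourceField a t (h t)))) t := by
  have hD0 : h t ^ 2 - (a : ℂ) ^ 2 ≠ 0 := sub_ne_zero.2 hD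
  have hdiff : HasDerivAt (fun s => h s ^ 2 - (a : ℂ) ^ 2) (2 * h t * w) t :=
    (hh.fun_pow 2).sub_const _ |>.congr_deriv (by push_cast; ring)
  have hts : HasDerivAt (fun s : ℝ => 4 * (s : ℂ) * h s ^ 2)
      (4 * h t ^ 2 + 4 * t * (2 * h t * w)) t :=
    ((hasDerivAt_id' t).ofReal_comp.const_mul 4).mul (hh.fun_pow 2)
      |>.congr_deriv (by push_cast; ring)
  have hexp := (hts.fun_div (hdiff.fun_pow 2) (pow_ne_zero 2 hD0)).cexp
  refine (hdiff.mul hexp).congr_deriv ?_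
  rw [mul_twoSourceFactor_mul_sub_twoSourceField hK, twoSourceFactor]
  field_simp
  ring

end TwoSource

theorem stmt_11_general (a : ℝ) (T : ℝ) (h h' : ℝ → ℂ)
    (hne : ∀ t ∈ Set.Ico (0:ℝ) T, (h t) ^ 2 ≠ (a : ℂ) ^ 2)
    (hne2 : ∀ t ∈ Set.Ico (0:ℝ) T,
      ((h t) ^ 2 - (a : ℂ) ^ 2) ^ 2 ≠ 4 * (t : ℂ) * ((h t) ^ 2 + (a : ℂ) ^ 2))
    (hd : ∀ t ∈ Set.Ico (0:ℝ) T, HasDerivAt h (h' t) t) :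
    (∀ t ∈ Set.Ico (0:ℝ) T,
        h' t = -(2 * h t / ((h t) ^ 2 - (a : ℂ) ^ 2)) /
          (1 - 4 * (t : ℂ) * ((h t) ^ 2 + (a : ℂ) ^ 2)
            / ((h t) ^ 2 - (a : ℂ) ^ 2) ^ 2))
    ↔ (∀ s ∈ Set.Ico (0:ℝ) T, ∀ t ∈ Set.Ico (0:ℝ) T,
        ((h s) ^ 2 - (a : ℂ) ^ 2) *
            Complex.exp (4 * (s : ℂ) * (h s) ^ 2 / ((h s) ^ 2 - (a : ℂ) ^ 2) ^ 2)
          = ((h t) ^ 2 - (a : ℂ) ^ 2) *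
            Complex.exp (4 * (t : ℂ) * (h t) ^ 2 / ((h t) ^ 2 - (a : ℂ) ^ 2) ^ 2)) := by
  have hK t (ht : t ∈ Ico 0 T) := twoSourceFactor_ne_zero (hne t ht) (hne2 t ht)
  have hF t (ht : t ∈ Ico 0 T) := hasDerivAt_twoSourceIntegral (hne t ht) (hK t ht) (hd t ht)
  suffices (∀ t ∈ Ico 0 T, h' t = twoSourceField a t (h t)) ↔
      ∀ t ∈ Ico 0 T, h t = 0 ∨ h' t = twoSourceField a t (h t) by
    refine this.trans <| .trans (forall₂_congr fun t ht => ?_)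
      ((convex_Ico 0 T).forall_eq_iff_forall_hasDerivWithinAt_eq_zero
        (f := fun s => twoSourceIntegral a s (h s)) (uniqueDiffOn_Ico 0 T)
        fun t ht => (hF t ht).hasDerivWithinAt).symm
    simp [hK t ht, sub_eq_zero]
  refine ⟨fun hode t ht => Or.inr (hode t ht), fun hzero t ht => ?_⟩
  rcases hzero t ht with h0 | hode
  · obtain ⟨b, htb, hbT⟩ := exists_between ht.2
    have hsub : Icc t b ⊆ Ico 0 T := (Icc_subset_Ico_iff htb.le).2 ⟨ht.1, hbT⟩
    have hh't : h' t = 0 := by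
      refine eq_zero_of_eq_zero_or_hasDerivAt_eq_mul htb (fun s hs => hd s (hsub hs))
        (g := fun s => -2 / ((h s ^ 2 - (a : ℂ) ^ 2) * twoSourceFactor a s (h s)))
        (fun s hs => ?_) (fun s hs => ?_) h0
      · exact ((hd s (hsub hs)).continuousAt.twoSourceField_coeff (hne s (hsub hs))
          (hK s (hsub hs))).continuousWithinAt
      · exact (hzero s (hsub (Ico_subset_Icc_self hs))).imp_right (·.trans twoSourceField_eq_mul)
    simp [hh't, twoSourceField, h0]
  · exact hode

/-- Two-source analogue: the ODE (4.4) holds on `[0,T)` iff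
`t ↦ (h² - a²) exp(4t h²/(h² - a²)²)` is constant on `[0,T)`. -/
theorem stmt_11 (a : ℝ) (ha : 0 < a) (T : ℝ) (hT : 0 < T) (h h' : ℝ → ℂ)
    (hne : ∀ t ∈ Set.Ico (0:ℝ) T, (h t) ^ 2 ≠ (a : ℂ) ^ 2)
    (hne2 : ∀ t ∈ Set.Ico (0:ℝ) T,
      ((h t) ^ 2 - (a : ℂ) ^ 2) ^ 2 ≠ 4 * (t : ℂ) * ((h t) ^ 2 + (a : ℂ) ^ 2))
    (hd : ∀ t ∈ Set.Ico (0:ℝ) T, HasDerivAt h (h' t) t) :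
    (∀ t ∈ Set.Ico (0:ℝ) T,
        h' t = -(2 * h t / ((h t) ^ 2 - (a : ℂ) ^ 2)) /
          (1 - 4 * (t : ℂ) * ((h t) ^ 2 + (a : ℂ) ^ 2)
            / ((h t) ^ 2 - (a : ℂ) ^ 2) ^ 2))
    ↔ (∀ s ∈ Set.Ico (0:ℝ) T, ∀ t ∈ Set.Ico (0:ℝ) T,
        ((h s) ^ 2 - (a : ℂ) ^ 2) *
            Complex.exp (4 * (s : ℂ) * (h s) ^ 2 / ((h s) ^ 2 - (a : ℂ) ^ 2) ^ 2)
          = ((h t) ^ 2 - (a : ℂ) ^ 2) *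
            Complex.exp (4 * (t : ℂ) * (h t) ^ 2 / ((h t) ^ 2 - (a : ℂ) ^ 2) ^ 2)) :=
  stmt_11_general a T h h' hne hne2 hd
end

section
/- Let a > 0, z ∈ ℂ with Im z > 0, T > 0, and let h : [0,T) → ℂ be differentiable with h(0) = z, h(t)² ≠ a², (h(t)² − a²)² ≠ 4t(h(t)² + a²), and (h(t)² − a²)·exp(4t·h(t)²/(h(t)² − a²)²) = z² − a² for all t ∈ [0,T). Define g(t) := h(t) + 4t·h(t)/(h(t)² − a²). Then g(0) = z and g′(t) = 2h(t)/(h(t)² − a²) for all t ∈ [0,T). -/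
/-!
The left side `F t = (h² - a²) exp(4t h²/(h² - a²)²)` of the functional equation is constant on
`[0, T)`, so `F' = 0`. With `u = h² - a²` and `D = u² - 4t(h² + a²)`, one computes
`F' = exp(…) · 2h (h' D + 2h u) / u²` and `g' = (h' D + 4h u) / u²`. Since `h t ≠ 0` (otherwise
the functional equation forces `z = 0`), `h' D = -2h u`, whence `g' = 2h / u`.
-/

open Complex

theorem HasDerivAt.eq_zero_of_forall_mem_eq {𝕜 F : Type*} [NontriviallyNormedField 𝕜]
    [NormedAddCommGroup F] [NormedSpace 𝕜 F] {f : 𝕜 → F} {f' c : F} {s : Set 𝕜} {x : 𝕜}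
    (hf : HasDerivAt f f' x) (hs : UniqueDiffWithinAt 𝕜 s x) (hx : x ∈ s)
    (hc : ∀ y ∈ s, f y = c) : f' = 0 :=
  hs.eq_deriv s hf.hasDerivWithinAt ((hasDerivWithinAt_const x s c).congr_of_mem hc hx)

namespace TwoSource

noncomputable def invariant (A : ℂ) (h : ℝ → ℂ) (s : ℝ) : ℂ :=
  (h s ^ 2 - A) * cexp (4 * s * h s ^ 2 / (h s ^ 2 - A) ^ 2)

noncomputable def loewnerMap (A : ℂ) (h : ℝ → ℂ) (s : ℝ) : ℂ :=
  h s + 4 * s * h s / (h s ^ 2 - A)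

variable {A d : ℂ} {h : ℝ → ℂ} {t : ℝ}

theorem hasDerivAt_invariant (hd : HasDerivAt h d t) (hA : h t ^ 2 ≠ A) :
    HasDerivAt (invariant A h)
      (cexp (4 * t * h t ^ 2 / (h t ^ 2 - A) ^ 2) * (2 * h t) *
        (d * ((h t ^ 2 - A) ^ 2 - 4 * t * (h t ^ 2 + A)) + 2 * h t * (h t ^ 2 - A)) /
          (h t ^ 2 - A) ^ 2) t := by
  have hu : h t ^ 2 - A ≠ 0 := sub_ne_zero.2 hA
  have hs : HasDerivAt (fun s : ℝ => (s : ℂ)) 1 t := (hasDerivAt_id t).ofReal_comp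
  have hsq := (hd.fun_pow 2).sub_const A
  have hφ := ((hs.const_mul 4).fun_mul (hd.fun_pow 2)).fun_div (hsq.fun_pow 2) (pow_ne_zero 2 hu)
  refine (hsq.fun_mul hφ.cexp).congr_deriv ?_
  field_simp
  ring

theorem hasDerivAt_loewnerMap (hd : HasDerivAt h d t) (hA : h t ^ 2 ≠ A) :
    HasDerivAt (loewnerMap A h)
      ((d * ((h t ^ 2 - A) ^ 2 - 4 * t * (h t ^ 2 + A)) + 4 * h t * (h t ^ 2 - A)) /
        (h t ^ 2 - A) ^ 2) t := by
  have hu : h t ^ 2 - A ≠ 0 := sub_ne_zero.2 hA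
  have hs : HasDerivAt (fun s : ℝ => (s : ℂ)) 1 t := (hasDerivAt_id t).ofReal_comp
  refine (hd.fun_add (((hs.const_mul 4).fun_mul hd).fun_div ((hd.fun_pow 2).sub_const A) hu)
    ).congr_deriv ?_
  field_simp
  ring

end TwoSource

theorem stmt_12_general (a : ℝ) (z : ℂ) (hz : 0 < z.im)
    (T : ℝ) (h h' : ℝ → ℂ) (h0 : h 0 = z)
    (hne : ∀ t ∈ Set.Ico (0:ℝ) T, (h t) ^ 2 ≠ (a : ℂ) ^ 2)
    (hfe : ∀ t ∈ Set.Ico (0:ℝ) T,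
      ((h t) ^ 2 - (a : ℂ) ^ 2) *
          Complex.exp (4 * (t : ℂ) * (h t) ^ 2 / ((h t) ^ 2 - (a : ℂ) ^ 2) ^ 2)
        = z ^ 2 - (a : ℂ) ^ 2)
    (hd : ∀ t ∈ Set.Ico (0:ℝ) T, HasDerivAt h (h' t) t) :
    (fun s : ℝ => h s + 4 * (s : ℂ) * h s / ((h s) ^ 2 - (a : ℂ) ^ 2)) 0 = z ∧
    ∀ t ∈ Set.Ico (0:ℝ) T,
      HasDerivAt (fun s : ℝ => h s + 4 * (s : ℂ) * h s / ((h s) ^ 2 - (a : ℂ) ^ 2))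
        (2 * h t / ((h t) ^ 2 - (a : ℂ) ^ 2)) t := by
  refine ⟨by simp [h0], fun t ht => ?_⟩
  have hu : h t ^ 2 - (a : ℂ) ^ 2 ≠ 0 := sub_ne_zero.2 (hne t ht)
  have hc : h t ≠ 0 := by
    intro hc
    have hz2 : z ^ 2 = 0 := by simpa [hc] using (hfe t ht).symm
    simp [pow_eq_zero_iff two_ne_zero |>.1 hz2] at hz
  have hF := (TwoSource.hasDerivAt_invariant (hd t ht) (hne t ht)).eq_zero_of_forall_mem_eq
    (uniqueDiffOn_Ico 0 T t ht) ht hfe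
  have hbracket : h' t * ((h t ^ 2 - (a : ℂ) ^ 2) ^ 2 - 4 * t * (h t ^ 2 + (a : ℂ) ^ 2))
      + 2 * h t * (h t ^ 2 - (a : ℂ) ^ 2) = 0 := by
    simpa [hc, hu, Complex.exp_ne_zero] using hF
  refine (TwoSource.hasDerivAt_loewnerMap (hd t ht) (hne t ht)).congr_deriv ?_
  field_simp
  linear_combination hbracket

/-- Branch-free form of Proposition 4.1: if
`(h² - a²) exp(4t h²/(h² - a²)²) = z² - a²` on `[0,T)` and
`g t = h t + 4t h t/(h t² - a²)`, then `g 0 = z` and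
`g' t = 2 h t/(h t² - a²)`. -/
theorem stmt_12 (a : ℝ) (ha : 0 < a) (z : ℂ) (hz : 0 < z.im)
    (T : ℝ) (hT : 0 < T) (h h' : ℝ → ℂ) (h0 : h 0 = z)
    (hne : ∀ t ∈ Set.Ico (0:ℝ) T, (h t) ^ 2 ≠ (a : ℂ) ^ 2)
    (hne2 : ∀ t ∈ Set.Ico (0:ℝ) T,
      ((h t) ^ 2 - (a : ℂ) ^ 2) ^ 2 ≠ 4 * (t : ℂ) * ((h t) ^ 2 + (a : ℂ) ^ 2))
    (hfe : ∀ t ∈ Set.Ico (0:ℝ) T,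
      ((h t) ^ 2 - (a : ℂ) ^ 2) *
          Complex.exp (4 * (t : ℂ) * (h t) ^ 2 / ((h t) ^ 2 - (a : ℂ) ^ 2) ^ 2)
        = z ^ 2 - (a : ℂ) ^ 2)
    (hd : ∀ t ∈ Set.Ico (0:ℝ) T, HasDerivAt h (h' t) t) :
    (fun s : ℝ => h s + 4 * (s : ℂ) * h s / ((h s) ^ 2 - (a : ℂ) ^ 2)) 0 = z ∧
    ∀ t ∈ Set.Ico (0:ℝ) T,
      HasDerivAt (fun s : ℝ => h s + 4 * (s : ℂ) * h s / ((h s) ^ 2 - (a : ℂ) ^ 2))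
        (2 * h t / ((h t) ^ 2 - (a : ℂ) ^ 2)) t :=
  stmt_12_general a z hz T h h' h0 hne hfe hd
end

section
/- Define F(z) = 1 + (z² − 1)·exp(z²/(z² − 1)²) for z ∈ ℂ with z² ≠ 1. Then as z → 0, F(z) = −(3/2)z⁴ + O(z⁶); that is, the function z ↦ F(z) + (3/2)z⁴ is O(|z|⁶) as z → 0. -/
/-!
Put `w = z²/(z² - 1)²` and expand `exp w = 1 + w + w²/2 + O(w³)`. The truncated part
`1 + (z² - 1)(1 + w + w²/2)` is a rational function equal to `-(3/2)z⁴ + z⁶ R(z)` with `R`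
regular at `0`, and the exponential remainder contributes `(z² - 1) · O(w³) = O(z⁶)`.
-/

open Asymptotics

/-- `F(z) = 1 + (z² - 1) exp(z²/(z² - 1)²)` (equation (4.9) at `t_c = 1/4`). -/
noncomputable def Fc (z : ℂ) : ℂ :=
  1 + (z ^ 2 - 1) * Complex.exp (z ^ 2 / (z ^ 2 - 1) ^ 2)

open Filter Topology Finset
open scoped Nat

lemma Asymptotics.isBigO_mul_of_tendsto {α R : Type*} [NormedRing R] [NormOneClass R]
    [NormMulClass R] {l : Filter α} {f g : α → R} {c : R} (hg : Tendsto g l (𝓝 c)) :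
    (fun x => f x * g x) =O[l] f := by
  simpa using (isBigO_refl f l).mul (hg.isBigO_one R)

lemma eventually_sq_sub_one_ne_zero : ∀ᶠ z : ℂ in 𝓝 0, z ^ 2 - 1 ≠ 0 :=
  (by fun_prop : Continuous fun z : ℂ => z ^ 2 - 1).continuousAt.eventually_ne (by norm_num)

lemma Fc_add_eq {z : ℂ} (hz : z ^ 2 - 1 ≠ 0) :
    Fc z + 3 / 2 * z ^ 4 =
      z ^ 6 * ((3 * z ^ 4 - 7 * z ^ 2 + 5) / (2 * (z ^ 2 - 1) ^ 3)) +
        (z ^ 2 - 1) * (Complex.exp (z ^ 2 / (z ^ 2 - 1) ^ 2) -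
          ∑ i ∈ range 3, (z ^ 2 / (z ^ 2 - 1) ^ 2) ^ i / i !) := by
  simp only [Fc, sum_range_succ, range_zero, sum_empty]
  field_simp
  norm_num [Nat.factorial]
  ring

lemma isBigO_Fc_exp_remainder :
    (fun z : ℂ => (z ^ 2 - 1) * (Complex.exp (z ^ 2 / (z ^ 2 - 1) ^ 2) -
        ∑ i ∈ range 3, (z ^ 2 / (z ^ 2 - 1) ^ 2) ^ i / i !)) =O[𝓝 0] fun z => z ^ 6 := by
  have hw : Tendsto (fun z : ℂ => z ^ 2 / (z ^ 2 - 1) ^ 2) (𝓝 0) (𝓝 0) := by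
    have : ContinuousAt (fun z : ℂ => z ^ 2 / (z ^ 2 - 1) ^ 2) 0 := by
      fun_prop (disch := norm_num)
    simpa using this.tendsto
  have hpow : (fun z : ℂ => (z ^ 2 - 1) * (z ^ 2 / (z ^ 2 - 1) ^ 2) ^ 3)
      =ᶠ[𝓝 0] fun z => z ^ 6 * ((z ^ 2 - 1) ^ 5)⁻¹ := by
    filter_upwards [eventually_sq_sub_one_ne_zero] with z hz
    field_simp
  have hinv : ContinuousAt (fun z : ℂ => ((z ^ 2 - 1) ^ 5)⁻¹) 0 := by
    fun_prop (disch := norm_num)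
  calc (fun z : ℂ => (z ^ 2 - 1) * (Complex.exp (z ^ 2 / (z ^ 2 - 1) ^ 2) -
          ∑ i ∈ range 3, (z ^ 2 / (z ^ 2 - 1) ^ 2) ^ i / i !))
      =O[𝓝 0] fun z => (z ^ 2 - 1) * (z ^ 2 / (z ^ 2 - 1) ^ 2) ^ 3 :=
        (isBigO_refl _ _).mul ((Complex.exp_sub_sum_range_isBigO_pow 3).comp_tendsto hw)
    _ =O[𝓝 0] fun z => z ^ 6 := hpow.trans_isBigO (isBigO_mul_of_tendsto hinv.tendsto)

/-- Expansion (4.25): `F(z) = -(3/2)z⁴ + O(z⁶)` as `z → 0`. -/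
theorem stmt_18 :
    (fun z : ℂ => Fc z + (3 / 2) * z ^ 4) =O[nhds 0] fun z : ℂ => z ^ 6 := by
  have hrat : ContinuousAt
      (fun z : ℂ => (3 * z ^ 4 - 7 * z ^ 2 + 5) / (2 * (z ^ 2 - 1) ^ 3)) 0 := by
    fun_prop (disch := norm_num)
  refine EventuallyEq.trans_isBigO ?_ <|
    (isBigO_mul_of_tendsto hrat.tendsto).add isBigO_Fc_exp_remainder
  exact eventually_sq_sub_one_ne_zero.mono fun z hz => Fc_add_eq hz
end
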